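/- Let s ∈ (0,1), r > 0, and let F ∈ L¹(B_R⁺, ℝ^{N+1}) be a vector field of the form F(z) = t^{1-2s}(A∇U·∇U)(z) β(z) arising from a solution U with ∇U·β ∈ H¹(B_r⁺, t^{1-2s}) and div F ∈ L¹(B_r⁺). Suppose there exist a constant C and r̄ ∈ (0,r) such that the boundary contribution satisfies δ^{1-2s} ∫_{B_r'} (α/μ)(x,δ)(A∇U·∇U)(x,δ) dx ≥ C/δ for all δ ∈ (0, r̄). Then ∫_{B_R⁺} t^{1-2s}(α/μ) A∇U·∇U dz = +∞. Consequently, if (α/μ)A∇U·∇U ∈ L¹(B_R⁺, t^{1-2s}), there exists a sequence δ_n → 0⁺ with δ_n^{2-2s} ∫_{B'_{√(r²-δ_n²)}} (α/μ)(x,δ_n)(A∇U·∇U)(x,δ_n) dx → 0. -/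

import Mathlib

open MeasureTheory Real Set

noncomputable section

variable {N : ℕ}

/-- The last (vertical) coordinate `t` of a point `z = (x,t) ∈ ℝ^{N+1}`. -/
def lastC (z : EuclideanSpace ℝ (Fin (N + 1))) : ℝ := z (Fin.last N)

/-- The upper half-ball `B_r⁺`. -/
def halfBall (N : ℕ) (r : ℝ) : Set (EuclideanSpace ℝ (Fin (N + 1))) :=
  {z | ‖z‖ < r ∧ 0 < lastC z}

/-- The disc `B_r' ⊂ ℝ^N`. -/
def disc (N : ℕ) (r : ℝ) : Set (EuclideanSpace ℝ (Fin N)) := Metric.ball 0 r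

/-- The point `(x,t) ∈ ℝ^{N+1}` built from `x ∈ ℝ^N` and `t ∈ ℝ`. -/
def up (x : EuclideanSpace ℝ (Fin N)) (t : ℝ) : EuclideanSpace ℝ (Fin (N + 1)) :=
  (EuclideanSpace.equiv (Fin (N + 1)) ℝ).symm
    (Fin.snoc (EuclideanSpace.equiv (Fin N) ℝ x) t)

/-- The Muckenhoupt weight `t^{1-2s}` (more generally `t^a`). -/
def wt (a : ℝ) (z : EuclideanSpace ℝ (Fin (N + 1))) : ℝ := lastC z ^ a

/-- `du` is the weak partial derivative of `u` in direction `i` on the open set `Ω`,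
in the distributional sense. -/
def HasWeakPartialOn (u du : EuclideanSpace ℝ (Fin (N + 1)) → ℝ)
    (i : Fin (N + 1)) (Ω : Set (EuclideanSpace ℝ (Fin (N + 1)))) : Prop :=
  ∀ φ : EuclideanSpace ℝ (Fin (N + 1)) → ℝ, ContDiff ℝ (⊤ : ℕ∞) φ → HasCompactSupport φ →
    tsupport φ ⊆ Ω →
    ∫ z in Ω, u z * fderiv ℝ φ z (EuclideanSpace.single i 1) = -∫ z in Ω, du z * φ z

/-- `du` is the weak gradient of `u` on `Ω`. -/
def HasWeakGradOn (u : EuclideanSpace ℝ (Fin (N + 1)) → ℝ)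
    (du : EuclideanSpace ℝ (Fin (N + 1)) → EuclideanSpace ℝ (Fin (N + 1)))
    (Ω : Set (EuclideanSpace ℝ (Fin (N + 1)))) : Prop :=
  ∀ i, HasWeakPartialOn u (fun z => du z i) i Ω

/-- Membership in the weighted Sobolev space `H¹(B_r⁺, t^a)`, the function `du`
playing the role of the weak gradient of `u`. -/
def MemH1W (a : ℝ) (r : ℝ) (u : EuclideanSpace ℝ (Fin (N + 1)) → ℝ)
    (du : EuclideanSpace ℝ (Fin (N + 1)) → EuclideanSpace ℝ (Fin (N + 1))) : Prop :=
  HasWeakGradOn u du (halfBall N r) ∧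
    IntegrableOn (fun z => wt a z * (u z ^ 2 + ‖du z‖ ^ 2)) (halfBall N r)

/-- `g` is the trace of `w` on the bottom disc `B_r'`, characterized by `L¹` convergence
of the horizontal slices as `t → 0⁺`. -/
def IsTraceOn (r : ℝ) (w : EuclideanSpace ℝ (Fin (N + 1)) → ℝ)
    (g : EuclideanSpace ℝ (Fin N) → ℝ) : Prop :=
  Filter.Tendsto (fun t => ∫ x in disc N r, |w (up x t) - g x|)
    (nhdsWithin 0 (Set.Ioi 0)) (nhds 0)


/-- Weak partial derivative on an open subset of `ℝ^N`. -/
def HasWeakPartialOnDisc (g dg : EuclideanSpace ℝ (Fin N) → ℝ) (i : Fin N)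
    (Ω : Set (EuclideanSpace ℝ (Fin N))) : Prop :=
  ∀ φ : EuclideanSpace ℝ (Fin N) → ℝ, ContDiff ℝ (⊤ : ℕ∞) φ → HasCompactSupport φ →
    tsupport φ ⊆ Ω →
    ∫ x in Ω, g x * fderiv ℝ φ x (EuclideanSpace.single i 1) = -∫ x in Ω, dg x * φ x

/-- Membership in `W^{1,p}(B_r')`, with prescribed weak gradient `dg`. -/
def MemW1pDisc (p r : ℝ) (g : EuclideanSpace ℝ (Fin N) → ℝ)
    (dg : EuclideanSpace ℝ (Fin N) → EuclideanSpace ℝ (Fin N)) : Prop :=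
  (∀ i : Fin N, HasWeakPartialOnDisc (fun x => g x) (fun x => dg x i) i (disc N r)) ∧
  (∫⁻ x in disc N r, ENNReal.ofReal (|g x| ^ p)) < ⊤ ∧
  (∫⁻ x in disc N r, ENNReal.ofReal (‖dg x‖ ^ p)) < ⊤

/-- The `W^{1,p}(B_r')` norm. -/
def normW1pDisc (p r : ℝ) (g : EuclideanSpace ℝ (Fin N) → ℝ)
    (dg : EuclideanSpace ℝ (Fin N) → EuclideanSpace ℝ (Fin N)) : ℝ :=
  ((∫ x in disc N r, |g x| ^ p) + ∫ x in disc N r, ‖dg x‖ ^ p) ^ (1 / p)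

/-- The bilinear form `(A(z) y) · y'`. -/
def quadA (A : EuclideanSpace ℝ (Fin (N + 1)) → Matrix (Fin (N + 1)) (Fin (N + 1)) ℝ)
    (z y y' : EuclideanSpace ℝ (Fin (N + 1))) : ℝ :=
  ∑ i : Fin (N + 1), ∑ j : Fin (N + 1), A z i j * y j * y' i

/-- Structural assumption on `A`: block-diagonal form with symmetric upper-left
`N×N` block (equivalently, `A` symmetric with vanishing mixed entries),
entries bounded and Lipschitz (i.e. `W^{1,∞}`) with constant `Λ` on the closed
half-ball, and uniform ellipticity `λ₁|y|² ≤ A(z)y·y ≤ λ₂|y|²`. -/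
def GoodMatrix (R Λ lam1 lam2 : ℝ)
    (A : EuclideanSpace ℝ (Fin (N + 1)) → Matrix (Fin (N + 1)) (Fin (N + 1)) ℝ) : Prop :=
  (∀ z ∈ closure (halfBall N R), ∀ i j : Fin (N + 1), A z i j = A z j i) ∧
  (∀ z ∈ closure (halfBall N R), ∀ i : Fin N, A z i.castSucc (Fin.last N) = 0) ∧
  (∀ i j : Fin (N + 1), (∀ z ∈ closure (halfBall N R), |A z i j| ≤ Λ) ∧
    LipschitzOnWith (Real.toNNReal Λ) (fun z => A z i j) (closure (halfBall N R))) ∧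
  (∀ z ∈ closure (halfBall N R), ∀ y : EuclideanSpace ℝ (Fin (N + 1)),
    lam1 * ‖y‖ ^ 2 ≤ quadA A z y y ∧ quadA A z y y ≤ lam2 * ‖y‖ ^ 2)

/-- `U` (with weak gradient `dU` and trace `trU`) is a weak solution of
`-div(t^{1-2s} A ∇U) + t^{1-2s} c = 0` in `B_R⁺` with Neumann condition
`lim_{t→0⁺} t^{1-2s} A∇U·ν = h Tr(U) + g` on `B_R'`, tested against smooth
functions vanishing near `S_R⁺`. -/
def IsWeakSolution (s R : ℝ)
    (A : EuclideanSpace ℝ (Fin (N + 1)) → Matrix (Fin (N + 1)) (Fin (N + 1)) ℝ)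
    (c : EuclideanSpace ℝ (Fin (N + 1)) → ℝ)
    (h g : EuclideanSpace ℝ (Fin N) → ℝ)
    (U : EuclideanSpace ℝ (Fin (N + 1)) → ℝ)
    (dU : EuclideanSpace ℝ (Fin (N + 1)) → EuclideanSpace ℝ (Fin (N + 1)))
    (trU : EuclideanSpace ℝ (Fin N) → ℝ) : Prop :=
  MemH1W (1 - 2 * s) R U dU ∧ IsTraceOn R U trU ∧
  ∀ φ : EuclideanSpace ℝ (Fin (N + 1)) → ℝ, ContDiff ℝ (⊤ : ℕ∞) φ →
    (∃ ρ, ρ < R ∧ ∀ z : EuclideanSpace ℝ (Fin (N + 1)), ρ ≤ ‖z‖ → φ z = 0) →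
    (∫ z in halfBall N R, wt (1 - 2 * s) z *
        ∑ i : Fin (N + 1), ∑ j : Fin (N + 1),
          A z i j * dU z j * fderiv ℝ φ z (EuclideanSpace.single i 1)) +
      (∫ z in halfBall N R, wt (1 - 2 * s) z * c z * φ z) =
    ∫ x in disc N R, (g x + h x * trU x) * φ (up x 0)

/-- `μ(z) = A(z)z·z/|z|²`. -/
def muA (A : EuclideanSpace ℝ (Fin (N + 1)) → Matrix (Fin (N + 1)) (Fin (N + 1)) ℝ)
    (z : EuclideanSpace ℝ (Fin (N + 1))) : ℝ := quadA A z z z / ‖z‖ ^ 2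


/-! ### Auxiliary lemmas -/

lemma lastC_up {n : ℕ} (x : EuclideanSpace ℝ (Fin n)) (t : ℝ) : lastC (up x t) = t := by
  simp [lastC, up]

lemma norm_up_sq {n : ℕ} (x : EuclideanSpace ℝ (Fin n)) (t : ℝ) :
    ‖up x t‖ ^ 2 = ‖x‖ ^ 2 + t ^ 2 := by
  rw [EuclideanSpace.norm_eq, EuclideanSpace.norm_eq,
    Real.sq_sqrt (by positivity), Real.sq_sqrt (by positivity)]
  rw [Fin.sum_univ_castSucc]
  simp [up, sq_abs]

lemma measurable_lastC {n : ℕ} : Measurable (lastC (N := n)) :=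
  (EuclideanSpace.proj (𝕜 := ℝ) (Fin.last n)).continuous.measurable

lemma measurableSet_halfBall (n : ℕ) (r : ℝ) : MeasurableSet (halfBall n r) :=
  (measurableSet_lt measurable_norm measurable_const).inter
    (measurableSet_lt measurable_const measurable_lastC)

lemma up_mem_halfBall {n : ℕ} {r : ℝ} (hr : 0 < r) (x : EuclideanSpace ℝ (Fin n)) (t : ℝ) :
    up x t ∈ halfBall n r ↔ 0 < t ∧ x ∈ disc n (Real.sqrt (r ^ 2 - t ^ 2)) := by
  simp only [halfBall, mem_setOf_eq, disc, Metric.mem_ball, dist_zero_right, lastC_up]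
  constructor
  · rintro ⟨h1, h2⟩
    refine ⟨h2, ?_⟩
    have h3 : ‖up x t‖ ^ 2 < r ^ 2 := by nlinarith [norm_nonneg (up x t)]
    rw [norm_up_sq] at h3
    rw [show ‖x‖ = Real.sqrt (‖x‖ ^ 2) from (Real.sqrt_sq (norm_nonneg x)).symm]
    exact Real.sqrt_lt_sqrt (by positivity) (by linarith)
  · rintro ⟨h2, h1⟩
    refine ⟨?_, h2⟩
    have hx2 : ‖x‖ ^ 2 < r ^ 2 - t ^ 2 := (Real.lt_sqrt (norm_nonneg x)).1 h1
    have h3 : ‖up x t‖ ^ 2 < r ^ 2 := by rw [norm_up_sq]; linarith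
    nlinarith [norm_nonneg (up x t)]

lemma lintegral_one_div_top {b c : ℝ} (hb : 0 < b) (hc : 0 < c) :
    ∫⁻ t in Set.Ioo (0 : ℝ) b, ENNReal.ofReal (c / t) = ⊤ := by
  by_contra h
  have hmeas : Measurable fun t : ℝ => c / t := measurable_const.div measurable_id
  have hnn : 0 ≤ᵐ[volume.restrict (Set.Ioo (0:ℝ) b)] fun t => c / t :=
    (ae_restrict_iff' measurableSet_Ioo).2 (ae_of_all _ fun t ht => div_nonneg hc.le ht.1.le)
  have hint : IntegrableOn (fun t : ℝ => c / t) (Set.Ioo 0 b) := by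
    refine ⟨hmeas.aestronglyMeasurable, ?_⟩
    rw [hasFiniteIntegral_iff_ofReal hnn]
    exact lt_top_iff_ne_top.2 h
  have hint2 : IntegrableOn (fun t : ℝ => t ^ (-1 : ℝ)) (Set.Ioo 0 b) := by
    have h2 := hint.const_mul c⁻¹
    refine (integrableOn_congr_fun (fun t ht => ?_) measurableSet_Ioo).1 h2
    rw [Real.rpow_neg_one]
    field_simp
  have := (intervalIntegral.integrableOn_Ioo_rpow_iff hb).1 hint2
  linarith

theorem lintegral_up (n : ℕ) (f : EuclideanSpace ℝ (Fin (n+1)) → ENNReal)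
    (hf : AEMeasurable f volume) :
    ∫⁻ z, f z = ∫⁻ t : ℝ, ∫⁻ x : EuclideanSpace ℝ (Fin n), f (up x t) := by
  have e1 := (EuclideanSpace.volume_preserving_symm_measurableEquiv_toLp (Fin (n+1))).symm
  have e2 := (volume_preserving_piFinSuccAbove (fun _ : Fin (n+1) => ℝ) (Fin.last n)).symm
  have e3 := EuclideanSpace.volume_preserving_symm_measurableEquiv_toLp (Fin n)
  rw [← e1.lintegral_comp_emb
    (MeasurableEquiv.toLp 2 (Fin (n+1) → ℝ)).symm.symm.measurableEmbedding f]
  rw [← e2.lintegral_comp_emb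
    (MeasurableEquiv.piFinSuccAbove (fun _ : Fin (n+1) => ℝ) (Fin.last n)).symm.measurableEmbedding]
  have hmeas : AEMeasurable
      (fun p : ℝ × (Fin n → ℝ) =>
        f ((MeasurableEquiv.toLp 2 (Fin (n+1) → ℝ)).symm.symm
          ((MeasurableEquiv.piFinSuccAbove (fun _ : Fin (n+1) => ℝ) (Fin.last n)).symm p)))
      volume :=
    hf.comp_quasiMeasurePreserving (e1.comp e2).quasiMeasurePreserving
  rw [Measure.volume_eq_prod, lintegral_prod _ hmeas]
  congr 1
  ext t
  rw [← e3.lintegral_comp_emb (MeasurableEquiv.toLp 2 (Fin n → ℝ)).symm.measurableEmbedding]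
  congr 1
  ext x
  congr 1
  apply WithLp.ofLp_injective 2
  show (MeasurableEquiv.piFinSuccAbove (fun _ : Fin (n+1) => ℝ) (Fin.last n)).symm
      (t, (MeasurableEquiv.toLp 2 (Fin n → ℝ)).symm x) = WithLp.ofLp (up x t)
  simp only [MeasurableEquiv.piFinSuccAbove, MeasurableEquiv.symm_mk, MeasurableEquiv.coe_mk,
    Equiv.symm_symm, Fin.insertNthEquiv_apply]
  exact Fin.insertNth_last' t _

theorem lintegral_region {n : ℕ} (S : Set (EuclideanSpace ℝ (Fin (n+1)))) (hS : MeasurableSet S)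
    (f : EuclideanSpace ℝ (Fin (n+1)) → ENNReal) (hf : AEMeasurable f (volume.restrict S))
    (T : Set ℝ) (hT : MeasurableSet T) (D : ℝ → Set (EuclideanSpace ℝ (Fin n)))
    (hD : ∀ t, MeasurableSet (D t))
    (hmem : ∀ x t, up x t ∈ S ↔ t ∈ T ∧ x ∈ D t) :
    ∫⁻ z in S, f z = ∫⁻ t in T, ∫⁻ x in D t, f (up x t) := by
  rw [← lintegral_indicator hS]
  rw [lintegral_up n _ ((aemeasurable_indicator_iff hS).2 hf)]
  rw [← lintegral_indicator hT]
  congr 1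
  ext t
  by_cases ht : t ∈ T
  · rw [Set.indicator_of_mem ht, ← lintegral_indicator (hD t)]
    congr 1
    ext x
    by_cases hx : x ∈ D t
    · rw [Set.indicator_of_mem hx, Set.indicator_of_mem ((hmem x t).2 ⟨ht, hx⟩)]
    · rw [Set.indicator_of_notMem hx, Set.indicator_of_notMem (fun h => hx ((hmem x t).1 h).2)]
  · rw [Set.indicator_of_notMem ht]
    have hz : ∀ x : EuclideanSpace ℝ (Fin n), S.indicator f (up x t) = 0 := fun x =>
      Set.indicator_of_notMem (fun h => ht ((hmem x t).1 h).1) _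
    simp only [hz, lintegral_zero]

lemma quadA_single {n : ℕ} (A : EuclideanSpace ℝ (Fin (n + 1)) → Matrix (Fin (n + 1)) (Fin (n + 1)) ℝ)
    (z : EuclideanSpace ℝ (Fin (n + 1))) :
    quadA A z (EuclideanSpace.single (Fin.last n) 1) (EuclideanSpace.single (Fin.last n) 1)
      = A z (Fin.last n) (Fin.last n) := by
  simp [quadA, EuclideanSpace.single_apply]


set_option maxHeartbeats 1600000

/-- the boundary term `δ^{2-2s}∫ (α/μ)(A∇U·∇U)(·,δ)` vanishes along a
sequence `δ_n → 0⁺`: if it were bounded below by `C/δ` after multiplication by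
`δ^{1-2s}`, the weighted energy `∫ t^{1-2s}(α/μ)A∇U·∇U` would be infinite. -/
theorem boundary_term_vanishes
    {N : ℕ} (s R r lam1 lam2 Λ : ℝ) (hs : s ∈ Set.Ioo (0 : ℝ) 1)
    (hr : 0 < r) (hrR : r < R) (hlam1 : 0 < lam1)
    (A : EuclideanSpace ℝ (Fin (N + 1)) → Matrix (Fin (N + 1)) (Fin (N + 1)) ℝ)
    (hA : GoodMatrix R Λ lam1 lam2 A)
    (U : EuclideanSpace ℝ (Fin (N + 1)) → ℝ)
    (dU : EuclideanSpace ℝ (Fin (N + 1)) → EuclideanSpace ℝ (Fin (N + 1)))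
    (hU : MemH1W (1 - 2 * s) R U dU) :
    -- abbreviation for the integrand `(α/μ) A∇U·∇U`
    (∀ Q : EuclideanSpace ℝ (Fin (N + 1)) → ℝ,
      (Q = fun z => (A z (Fin.last N) (Fin.last N) / muA A z) *
          quadA A z (dU z) (dU z)) →
      -- (a) a lower bound `C/δ` forces infinite weighted energy
      ((∃ C : ℝ, 0 < C ∧ ∃ rb ∈ Set.Ioo (0 : ℝ) r, ∀ δ ∈ Set.Ioo (0 : ℝ) rb,
          C / δ ≤ δ ^ (1 - 2 * s) * ∫ x in disc N r, Q (up x δ)) →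
        (∫⁻ z in halfBall N R, ENNReal.ofReal (wt (1 - 2 * s) z * Q z)) = ⊤) ∧
      -- (b) consequently, finite weighted energy yields a vanishing sequence
      ((∫⁻ z in halfBall N R, ENNReal.ofReal (wt (1 - 2 * s) z * Q z)) < ⊤ →
        ∃ δseq : ℕ → ℝ, (∀ n, 0 < δseq n) ∧
          Filter.Tendsto δseq Filter.atTop (nhds 0) ∧
          Filter.Tendsto
            (fun n => (δseq n) ^ (2 - 2 * s) *
              ∫ x in disc N (Real.sqrt (r ^ 2 - (δseq n) ^ 2)), Q (up x (δseq n)))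
            Filter.atTop (nhds 0))) := by
  intro Q hQ
  subst hQ
  have hR : 0 < R := hr.trans hrR
  set G : EuclideanSpace ℝ (Fin (N + 1)) → ℝ := fun z => U z ^ 2 + ‖dU z‖ ^ 2 with hG
  have hGint : IntegrableOn (fun z => wt (1 - 2 * s) z * G z) (halfBall N R) := hU.2
  -- `lam2` is positive
  have hz0 : up (0 : EuclideanSpace ℝ (Fin N)) (R / 2) ∈ halfBall N R := by
    constructor
    · have h0 : ‖up (0 : EuclideanSpace ℝ (Fin N)) (R / 2)‖ ^ 2 = (R / 2) ^ 2 := by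
        rw [norm_up_sq]; simp
      nlinarith [norm_nonneg (up (0 : EuclideanSpace ℝ (Fin N)) (R / 2))]
    · rw [lastC_up]; linarith
  have hlam12 : lam1 ≤ lam2 := by
    have h := (hA.2.2.2 _ (subset_closure hz0)) (EuclideanSpace.single (Fin.last N) 1)
    rw [quadA_single, EuclideanSpace.norm_single, norm_one, one_pow, mul_one, mul_one] at h
    linarith [h.1, h.2]
  have hlam2 : 0 < lam2 := hlam1.trans_le hlam12
  set κ2 : ℝ := lam2 / lam1 * lam2 with hκ2def
  have hκ2 : 0 < κ2 := by positivity
  -- pointwise bounds on `Q`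
  have hQbound : ∀ z ∈ halfBall N R,
      0 ≤ (A z (Fin.last N) (Fin.last N) / muA A z) * quadA A z (dU z) (dU z) ∧
        (A z (Fin.last N) (Fin.last N) / muA A z) * quadA A z (dU z) (dU z) ≤ κ2 * G z := by
    intro z hz
    have hzc : z ∈ closure (halfBall N R) := subset_closure hz
    have hzn : 0 < ‖z‖ := by
      rw [norm_pos_iff]
      intro h
      have h2 := hz.2
      rw [h] at h2
      have h3 : lastC (0 : EuclideanSpace ℝ (Fin (N + 1))) = 0 := by simp [lastC]
      rw [h3] at h2
      exact lt_irrefl 0 h2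
    have hell := hA.2.2.2 z hzc
    have hed := hell (dU z)
    have hez := hell z
    have hee := hell (EuclideanSpace.single (Fin.last N) 1)
    rw [quadA_single, EuclideanSpace.norm_single, norm_one, one_pow, mul_one, mul_one] at hee
    have hmu1 : lam1 ≤ muA A z := by
      rw [muA, le_div_iff₀ (by positivity)]
      exact hez.1
    have hd0 : 0 ≤ quadA A z (dU z) (dU z) := le_trans (by positivity) hed.1
    constructor
    · exact mul_nonneg (div_nonneg (by linarith [hee.1]) (by linarith)) hd0
    · have hdiv : A z (Fin.last N) (Fin.last N) / muA A z ≤ lam2 / lam1 :=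
        div_le_div₀ hlam2.le hee.2 hlam1 hmu1
      calc (A z (Fin.last N) (Fin.last N) / muA A z) * quadA A z (dU z) (dU z)
          ≤ (lam2 / lam1) * quadA A z (dU z) (dU z) := mul_le_mul_of_nonneg_right hdiv hd0
        _ ≤ (lam2 / lam1) * (lam2 * G z) := by
            apply mul_le_mul_of_nonneg_left _ (by positivity)
            refine le_trans hed.2 ?_
            have h5 : ‖dU z‖ ^ 2 ≤ G z := by simp only [hG]; nlinarith [sq_nonneg (U z)]
            nlinarith
        _ = κ2 * G z := by rw [hκ2def]; ring
  -- slice bound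
  have hslice : ∀ δ : ℝ, 0 < δ → ∀ ρ : ℝ,
      (∀ x ∈ disc N ρ, up x δ ∈ halfBall N R) →
      ENNReal.ofReal (δ ^ (1 - 2 * s) *
          ∫ x in disc N ρ, (A (up x δ) (Fin.last N) (Fin.last N) / muA A (up x δ)) *
            quadA A (up x δ) (dU (up x δ)) (dU (up x δ))) ≤
        ENNReal.ofReal κ2 *
          ∫⁻ x in disc N ρ, ENNReal.ofReal (wt (1 - 2 * s) (up x δ) * G (up x δ)) := by
    intro δ hδ ρ hmem
    set q : EuclideanSpace ℝ (Fin (N + 1)) → ℝ := fun z =>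
      (A z (Fin.last N) (Fin.last N) / muA A z) * quadA A z (dU z) (dU z) with hq
    by_cases hI : IntegrableOn (fun x => q (up x δ)) (disc N ρ)
    · have hwt : ∀ x : EuclideanSpace ℝ (Fin N), wt (1 - 2 * s) (up x δ) = δ ^ (1 - 2 * s) :=
        fun x => by rw [wt, lastC_up]
      have h1 : δ ^ (1 - 2 * s) * ∫ x in disc N ρ, q (up x δ)
          = ∫ x in disc N ρ, wt (1 - 2 * s) (up x δ) * q (up x δ) := by
        simp_rw [hwt]
        rw [integral_const_mul]
      rw [h1]
      have hInt2 : Integrable (fun x => wt (1 - 2 * s) (up x δ) * q (up x δ))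
          (volume.restrict (disc N ρ)) := by
        simp_rw [hwt]
        exact hI.const_mul _
      have hwtnn : ∀ x : EuclideanSpace ℝ (Fin N), 0 ≤ wt (1 - 2 * s) (up x δ) := fun x => by
        rw [hwt]; positivity
      have hnn : 0 ≤ᵐ[volume.restrict (disc N ρ)]
          fun x => wt (1 - 2 * s) (up x δ) * q (up x δ) :=
        (ae_restrict_iff' measurableSet_ball).2 (ae_of_all _ fun x hx =>
          mul_nonneg (hwtnn x) (hQbound _ (hmem x hx)).1)
      rw [ofReal_integral_eq_lintegral_ofReal hInt2 hnn]
      rw [← lintegral_const_mul' _ _ ENNReal.ofReal_ne_top]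
      refine lintegral_mono_ae ((ae_restrict_iff' measurableSet_ball).2
        (ae_of_all _ fun x hx => ?_))
      rw [← ENNReal.ofReal_mul hκ2.le]
      apply ENNReal.ofReal_le_ofReal
      calc wt (1 - 2 * s) (up x δ) * q (up x δ)
          ≤ wt (1 - 2 * s) (up x δ) * (κ2 * G (up x δ)) :=
            mul_le_mul_of_nonneg_left (hQbound _ (hmem x hx)).2 (hwtnn x)
        _ = κ2 * (wt (1 - 2 * s) (up x δ) * G (up x δ)) := by ring
    · rw [integral_undef hI, mul_zero, ENNReal.ofReal_zero]
      exact zero_le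
  -- global integrability facts
  have hGae : AEMeasurable (fun z => ENNReal.ofReal (wt (1 - 2 * s) z * G z))
      (volume.restrict (halfBall N R)) :=
    ENNReal.measurable_ofReal.comp_aemeasurable hGint.1.aemeasurable
  have hGnn : 0 ≤ᵐ[volume.restrict (halfBall N R)] fun z => wt (1 - 2 * s) z * G z :=
    (ae_restrict_iff' (measurableSet_halfBall N R)).2 (ae_of_all _ fun z hz =>
      mul_nonneg (Real.rpow_nonneg hz.2.le _) (by positivity))
  have hGfin : ∫⁻ z in halfBall N R, ENNReal.ofReal (wt (1 - 2 * s) z * G z) < ⊤ :=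
    (hasFiniteIntegral_iff_ofReal hGnn).1 hGint.2
  constructor
  · -- part (a)
    rintro ⟨C, hC, rb, ⟨hrb0, hrbr⟩, hlow⟩
    have hRr : 0 < R ^ 2 - r ^ 2 := by nlinarith
    set τ : ℝ := min rb (Real.sqrt (R ^ 2 - r ^ 2)) with hτdef
    have hτ : 0 < τ := lt_min hrb0 (Real.sqrt_pos.2 hRr)
    have hτ2 : τ ^ 2 ≤ R ^ 2 - r ^ 2 := by
      have h1 : τ ≤ Real.sqrt (R ^ 2 - r ^ 2) := min_le_right _ _
      nlinarith [Real.sq_sqrt hRr.le, Real.sqrt_nonneg (R ^ 2 - r ^ 2)]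
    set Cyl : Set (EuclideanSpace ℝ (Fin (N + 1))) :=
      {z | 0 < lastC z ∧ lastC z < τ ∧ ‖z‖ ^ 2 - lastC z ^ 2 < r ^ 2} with hCyl
    have hCylm : MeasurableSet Cyl := by
      rw [hCyl, Set.setOf_and, Set.setOf_and]
      exact (measurableSet_lt measurable_const measurable_lastC).inter
        ((measurableSet_lt measurable_lastC measurable_const).inter
          (measurableSet_lt ((measurable_norm.pow_const 2).sub
            (measurable_lastC.pow_const 2)) measurable_const))
    have hCylsub : Cyl ⊆ halfBall N R := by
      rintro z ⟨h1, h2, h3⟩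
      refine ⟨?_, h1⟩
      have ht2 : lastC z ^ 2 < τ ^ 2 := by nlinarith
      have hz2 : ‖z‖ ^ 2 < R ^ 2 := by nlinarith
      nlinarith [norm_nonneg z]
    have hmemCyl : ∀ (x : EuclideanSpace ℝ (Fin N)) (t : ℝ),
        up x t ∈ Cyl ↔ t ∈ Set.Ioo 0 τ ∧ x ∈ disc N r := by
      intro x t
      simp only [hCyl, Set.mem_setOf_eq, lastC_up, Set.mem_Ioo, disc, Metric.mem_ball,
        dist_zero_right, norm_up_sq]
      constructor
      · rintro ⟨h1, h2, h3⟩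
        exact ⟨⟨h1, h2⟩, by nlinarith [norm_nonneg x]⟩
      · rintro ⟨⟨h1, h2⟩, h3⟩
        exact ⟨h1, h2, by nlinarith [norm_nonneg x]⟩
    have hfub := lintegral_region Cyl hCylm _
      (hGae.mono_measure (Measure.restrict_mono hCylsub le_rfl))
      (Set.Ioo 0 τ) measurableSet_Ioo (fun _ => disc N r) (fun _ => measurableSet_ball) hmemCyl
    have hL : ∫⁻ z in Cyl, ENNReal.ofReal (wt (1 - 2 * s) z * G z) < ⊤ :=
      lt_of_le_of_lt (lintegral_mono_set hCylsub) hGfin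
    set c : ℝ := C / κ2 with hcdef
    have hcpos : 0 < c := div_pos hC hκ2
    have hlow2 : ∀ t ∈ Set.Ioo (0 : ℝ) τ, ENNReal.ofReal (c / t) ≤
        ∫⁻ x in disc N r, ENNReal.ofReal (wt (1 - 2 * s) (up x t) * G (up x t)) := by
      intro t ht
      have hmem' : ∀ x ∈ disc N r, up x t ∈ halfBall N R := fun x hx =>
        hCylsub ((hmemCyl x t).2 ⟨ht, hx⟩)
      have h1 := hslice t ht.1 r hmem'
      have h2 := hlow t ⟨ht.1, lt_of_lt_of_le ht.2 (min_le_left _ _)⟩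
      have h3 : ENNReal.ofReal (C / t) ≤ ENNReal.ofReal κ2 *
          ∫⁻ x in disc N r, ENNReal.ofReal (wt (1 - 2 * s) (up x t) * G (up x t)) :=
        le_trans (ENNReal.ofReal_le_ofReal h2) h1
      have h4 : ENNReal.ofReal (C / t) = ENNReal.ofReal κ2 * ENNReal.ofReal (c / t) := by
        rw [← ENNReal.ofReal_mul hκ2.le]
        congr 1
        rw [hcdef]
        field_simp
      rw [h4] at h3
      exact (ENNReal.mul_le_mul_iff_right (ENNReal.ofReal_pos.2 hκ2).ne' ENNReal.ofReal_ne_top).1 h3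
    have htop : (⊤ : ENNReal) ≤ ∫⁻ z in Cyl, ENNReal.ofReal (wt (1 - 2 * s) z * G z) := by
      rw [hfub]
      calc (⊤ : ENNReal) = ∫⁻ t in Set.Ioo (0 : ℝ) τ, ENNReal.ofReal (c / t) :=
            (lintegral_one_div_top hτ hcpos).symm
        _ ≤ _ := lintegral_mono_ae ((ae_restrict_iff' measurableSet_Ioo).2
            (ae_of_all _ hlow2))
    exact absurd hL (not_lt.2 htop)
  · -- part (b)
    intro _
    set H : ℝ → ENNReal := fun t =>
      ∫⁻ x in disc N (Real.sqrt (r ^ 2 - t ^ 2)),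
        ENNReal.ofReal (wt (1 - 2 * s) (up x t) * G (up x t)) with hH
    have hsub : halfBall N r ⊆ halfBall N R := fun z hz => ⟨hz.1.trans hrR, hz.2⟩
    have hfub := lintegral_region (halfBall N r) (measurableSet_halfBall N r) _
      (hGae.mono_measure (Measure.restrict_mono hsub le_rfl))
      (Set.Ioi 0) measurableSet_Ioi (fun t => disc N (Real.sqrt (r ^ 2 - t ^ 2)))
      (fun t => measurableSet_ball)
      (fun x t => by rw [up_mem_halfBall hr]; simp [Set.mem_Ioi])
    have hHfin : ∫⁻ t in Set.Ioi (0 : ℝ), H t < ⊤ := by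
      rw [hH, ← hfub]
      exact lt_of_le_of_lt (lintegral_mono_set hsub) hGfin
    have hchoice : ∀ n : ℕ, ∃ δ : ℝ, (0 < δ ∧ δ < min (1 / (n + 1 : ℝ)) r) ∧
        ENNReal.ofReal δ * H δ < ENNReal.ofReal (1 / (n + 1)) := by
      intro n
      by_contra hcon
      push_neg at hcon
      set b : ℝ := min (1 / (n + 1 : ℝ)) r with hb'
      have hb : 0 < b := lt_min (by positivity) hr
      have hεpos : (0 : ℝ) < 1 / (n + 1) := by positivity
      have key : ∀ t ∈ Set.Ioo (0 : ℝ) b, ENNReal.ofReal ((1 / (n + 1)) / t) ≤ H t := by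
        intro t ht
        have h1 := hcon t ⟨ht.1, ht.2⟩
        rw [ENNReal.ofReal_div_of_pos ht.1]
        exact ENNReal.div_le_of_le_mul' h1
      have htop : (⊤ : ENNReal) ≤ ∫⁻ t in Set.Ioi (0 : ℝ), H t := by
        calc (⊤ : ENNReal) = ∫⁻ t in Set.Ioo (0 : ℝ) b, ENNReal.ofReal ((1 / (n + 1)) / t) :=
              (lintegral_one_div_top hb hεpos).symm
          _ ≤ ∫⁻ t in Set.Ioo (0 : ℝ) b, H t :=
              lintegral_mono_ae ((ae_restrict_iff' measurableSet_Ioo).2 (ae_of_all _ key))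
          _ ≤ _ := lintegral_mono_set (fun t ht => ht.1)
      exact absurd hHfin (not_lt.2 htop)
    choose δseq hδ1 hδ2 using hchoice
    have hδpos : ∀ n, 0 < δseq n := fun n => (hδ1 n).1
    refine ⟨δseq, hδpos, ?_, ?_⟩
    · refine tendsto_of_tendsto_of_tendsto_of_le_of_le tendsto_const_nhds
        tendsto_one_div_add_atTop_nhds_zero_nat (fun n => (hδpos n).le)
        (fun n => (lt_of_lt_of_le (hδ1 n).2 (min_le_left _ _)).le)
    · have hmem : ∀ n, ∀ x ∈ disc N (Real.sqrt (r ^ 2 - (δseq n) ^ 2)),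
          up x (δseq n) ∈ halfBall N R := by
        intro n x hx
        exact hsub ((up_mem_halfBall hr x (δseq n)).2 ⟨hδpos n, hx⟩)
      set g : ℕ → ℝ := fun n => (δseq n) ^ (2 - 2 * s) *
        ∫ x in disc N (Real.sqrt (r ^ 2 - (δseq n) ^ 2)),
          (A (up x (δseq n)) (Fin.last N) (Fin.last N) / muA A (up x (δseq n))) *
            quadA A (up x (δseq n)) (dU (up x (δseq n))) (dU (up x (δseq n))) with hg
      have hg0 : ∀ n, 0 ≤ g n := by
        intro n
        apply mul_nonneg (Real.rpow_nonneg (hδpos n).le _)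
        apply setIntegral_nonneg measurableSet_ball
        intro x hx
        exact (hQbound _ (hmem n x hx)).1
      have hgub : ∀ n, g n ≤ κ2 * (1 / (n + 1)) := by
        intro n
        have h1 := hslice (δseq n) (hδpos n) (Real.sqrt (r ^ 2 - (δseq n) ^ 2)) (hmem n)
        have hsplit : (δseq n) ^ (2 - 2 * s) = δseq n * (δseq n) ^ (1 - 2 * s) := by
          rw [show (2 - 2 * s) = 1 + (1 - 2 * s) by ring, Real.rpow_add (hδpos n),
            Real.rpow_one]
        have e1 : ENNReal.ofReal (g n) ≤ ENNReal.ofReal (κ2 * (1 / (n + 1))) := by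
          calc ENNReal.ofReal (g n)
              = ENNReal.ofReal (δseq n) * ENNReal.ofReal ((δseq n) ^ (1 - 2 * s) *
                  ∫ x in disc N (Real.sqrt (r ^ 2 - (δseq n) ^ 2)),
                    (A (up x (δseq n)) (Fin.last N) (Fin.last N) / muA A (up x (δseq n))) *
                      quadA A (up x (δseq n)) (dU (up x (δseq n))) (dU (up x (δseq n)))) := by
                simp only [hg]
                rw [hsplit, mul_assoc, ENNReal.ofReal_mul (hδpos n).le]
            _ ≤ ENNReal.ofReal (δseq n) * (ENNReal.ofReal κ2 * H (δseq n)) :=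
                mul_le_mul_right h1 _
            _ = ENNReal.ofReal κ2 * (ENNReal.ofReal (δseq n) * H (δseq n)) := by ring
            _ ≤ ENNReal.ofReal κ2 * ENNReal.ofReal (1 / (n + 1)) :=
                mul_le_mul_right (hδ2 n).le _
            _ = ENNReal.ofReal (κ2 * (1 / (n + 1))) := (ENNReal.ofReal_mul hκ2.le).symm
        have h2 := ENNReal.toReal_mono ENNReal.ofReal_ne_top e1
        rwa [ENNReal.toReal_ofReal (hg0 n), ENNReal.toReal_ofReal (by positivity)] at h2
      have hub : Filter.Tendsto (fun n : ℕ => κ2 * (1 / (n + 1 : ℝ))) Filter.atTop (nhds 0) := by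
        have h3 := tendsto_one_div_add_atTop_nhds_zero_nat.const_mul κ2
        simpa using h3
      exact tendsto_of_tendsto_of_tendsto_of_le_of_le tendsto_const_nhds hub hg0 hgub


end
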